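/- Fix reals a < b. With 𝒢(w,p_w,φ,p_φ) := (∂ₓw, p_w, ∂ₓφ, p_φ, ∂ₓw − φ), Πᴱ(z₁,z₂,z₃,z₄,z₅) := (z₁,z₂,z₃,0,0), and ℱ(z₁,…,z₅) := (W, z₂, z₁ − z₅, z₄) where W(x) := ∫ₐˣ z₁(s) ds − (1/(b−a)) ∫ₐᵇ ( ∫ₐʸ z₁(s) ds ) dy: for every tuple (w,p_w,φ,p_φ) with w, φ continuously differentiable on ℝ and ∫ₐᵇ w(x) dx = 0, one has ℱ( Πᴱ( 𝒢(w,p_w,φ,p_φ) ) ) = (w, p_w, ∂ₓw, 0) on [a,b]; that is, ℱ ∘ Πᴱ ∘ 𝒢 equals the implicit projection Πᴵ(w,p_w,φ,p_φ) = (w, p_w, ∂ₓw, 0), so the diagram formed by the explicit/implicit transformations and the flow-constraint projections commutes. -/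

import Mathlib

/-! Only the first component is not immediate. The antiderivative of `w'` based at `a` is
`w - w a`, and its mean over `[a, b]` is `-w a` because `w` has zero mean; subtracting that mean
returns `w`. -/

/-- Implicit-to-explicit Timoshenko state transformation `𝒢`. -/
noncomputable def Gmap :
    ((ℝ → ℝ) × (ℝ → ℝ) × (ℝ → ℝ) × (ℝ → ℝ)) →
      ((ℝ → ℝ) × (ℝ → ℝ) × (ℝ → ℝ) × (ℝ → ℝ) × (ℝ → ℝ))
  | (w, pw, φ, pφ) => (deriv w, pw, deriv φ, pφ, fun x => deriv w x - φ x)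

/-- Explicit flow-constraint projection `Πᴱ(z₁,z₂,z₃,z₄,z₅) = (z₁,z₂,z₃,0,0)`. -/
def PiE :
    ((ℝ → ℝ) × (ℝ → ℝ) × (ℝ → ℝ) × (ℝ → ℝ) × (ℝ → ℝ)) →
      ((ℝ → ℝ) × (ℝ → ℝ) × (ℝ → ℝ) × (ℝ → ℝ) × (ℝ → ℝ))
  | (z₁, z₂, z₃, _, _) => (z₁, z₂, z₃, 0, 0)

/-- Explicit-to-implicit inverse transformation `ℱ`. -/
noncomputable def Fmap (a b : ℝ) :
    ((ℝ → ℝ) × (ℝ → ℝ) × (ℝ → ℝ) × (ℝ → ℝ) × (ℝ → ℝ)) →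
      ((ℝ → ℝ) × (ℝ → ℝ) × (ℝ → ℝ) × (ℝ → ℝ))
  | (z₁, z₂, z₃, z₄, z₅) =>
    (fun x => (∫ s in a..x, z₁ s) - (1 / (b - a)) * ∫ y in a..b, (∫ s in a..y, z₁ s),
      z₂, fun x => z₁ x - z₅ x, z₄)

theorem integral_deriv_eq_sub_of_contDiff {f : ℝ → ℝ} (hf : ContDiff ℝ 1 f) (a x : ℝ) :
    ∫ s in a..x, deriv f s = f x - f a :=
  intervalIntegral.integral_deriv_eq_sub (fun s _ => hf.differentiable one_ne_zero s)
    ((hf.continuous_deriv le_rfl).intervalIntegrable a x)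

theorem integral_integral_deriv_eq_neg_of_integral_eq_zero {f : ℝ → ℝ} (hf : ContDiff ℝ 1 f)
    {a b : ℝ} (hmean : ∫ x in a..b, f x = 0) :
    ∫ y in a..b, ∫ s in a..y, deriv f s = -((b - a) * f a) := by
  simp only [integral_deriv_eq_sub_of_contDiff hf]
  rw [intervalIntegral.integral_sub (hf.continuous.intervalIntegrable a b)
    intervalIntegrable_const, hmean, intervalIntegral.integral_const, smul_eq_mul, zero_sub]

theorem integral_deriv_sub_mean_eq_of_integral_eq_zero {f : ℝ → ℝ} (hf : ContDiff ℝ 1 f)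
    {a b : ℝ} (hab : a ≠ b) (hmean : ∫ x in a..b, f x = 0) (x : ℝ) :
    (∫ s in a..x, deriv f s) - (1 / (b - a)) * ∫ y in a..b, ∫ s in a..y, deriv f s = f x := by
  have hba : b - a ≠ 0 := sub_ne_zero.mpr hab.symm
  rw [integral_deriv_eq_sub_of_contDiff hf,
    integral_integral_deriv_eq_neg_of_integral_eq_zero hf hmean]
  field_simp
  ring

theorem stmt17_general (a b : ℝ) (hab : a < b) (w pw φ pφ : ℝ → ℝ)
    (hw : ContDiff ℝ 1 w)
    (hmean : (∫ x in a..b, w x) = 0) :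
    ∀ x ∈ Set.Icc a b,
      (Fmap a b (PiE (Gmap (w, pw, φ, pφ)))).1 x = w x ∧
      (Fmap a b (PiE (Gmap (w, pw, φ, pφ)))).2.1 x = pw x ∧
      (Fmap a b (PiE (Gmap (w, pw, φ, pφ)))).2.2.1 x = deriv w x ∧
      (Fmap a b (PiE (Gmap (w, pw, φ, pφ)))).2.2.2 x = 0 :=
  fun x _ =>
    ⟨integral_deriv_sub_mean_eq_of_integral_eq_zero hw hab.ne hmean x, rfl, sub_zero _, rfl⟩

/-- Commutation of flow-constraint projections with the explicit/implicit
transformations: `ℱ ∘ Πᴱ ∘ 𝒢 = Πᴵ`, where `Πᴵ(w,p_w,φ,p_φ) = (w, p_w, ∂ₓw, 0)`. -/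
theorem stmt17 (a b : ℝ) (hab : a < b) (w pw φ pφ : ℝ → ℝ)
    (hw : ContDiff ℝ 1 w) (hφ : ContDiff ℝ 1 φ)
    (hmean : (∫ x in a..b, w x) = 0) :
    ∀ x ∈ Set.Icc a b,
      (Fmap a b (PiE (Gmap (w, pw, φ, pφ)))).1 x = w x ∧
      (Fmap a b (PiE (Gmap (w, pw, φ, pφ)))).2.1 x = pw x ∧
      (Fmap a b (PiE (Gmap (w, pw, φ, pφ)))).2.2.1 x = deriv w x ∧
      (Fmap a b (PiE (Gmap (w, pw, φ, pφ)))).2.2.2 x = 0 :=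
  stmt17_general a b hab w pw φ pφ hw hmean
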